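/- arXiv:1908.05209 — 2 statements merged into one kernel-verified Lean document; each statement's English description precedes it below -/
import Mathlib

section
/- If the standard-form SDP (minimize Tr(CX) over real symmetric n×n matrices X subject to Tr(A_iX) = b_i for i = 1,…,m and X positive semidefinite) is feasible and attains its optimal value, then there exists an optimal solution X whose rank r satisfies r(r+1)/2 ≤ m. -/
/-!
Take an optimal solution `X` of minimal rank `r` and factor it as `X = B Bᵀ` with `B` of full
column rank `r`. The symmetric `r × r` matrices form a space of dimension `r(r+1)/2`, so if this
exceeds `m` some nonzero symmetric `Δ` satisfies `Tr(Aᵢ B Δ Bᵀ) = 0` for all `i`. Then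
`B (1 + tΔ) Bᵀ` is feasible for all small `|t|`, so optimality forces `Tr(C B Δ Bᵀ) = 0`, and
moving `t` until `1 + tΔ` becomes singular gives an optimal solution of smaller rank.
-/

open Matrix Unitary

namespace Matrix

section Rank

variable {n k R : Type*} [Fintype n] [Fintype k] [DecidableEq k] [Field R]

theorem rank_mul_mul_transpose_of_isUnit {B : Matrix n k R} (hB : IsUnit (Bᵀ * B))
    (M : Matrix k k R) : (B * M * Bᵀ).rank = M.rank := by
  have hG := (isUnit_iff_isUnit_det _).mp hB
  refine le_antisymm ((rank_mul_le_left _ _).trans (rank_mul_le_right _ _)) ?_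
  calc M.rank = (Bᵀ * B * M * (Bᵀ * B)).rank := by
        rw [rank_mul_eq_left_of_isUnit_det _ _ hG, rank_mul_eq_right_of_isUnit_det _ _ hG]
    _ = (Bᵀ * (B * M * Bᵀ) * B).rank := by simp only [Matrix.mul_assoc]
    _ ≤ (B * M * Bᵀ).rank := (rank_mul_le_left _ _).trans (rank_mul_le_right _ _)

end Rank

section Sym2

variable {k R : Type*}

def ofSym2 [Semiring R] : (Sym2 k → R) →ₗ[R] Matrix k k R where
  toFun f := of fun i j => f s(i, j)
  map_add' _ _ := rfl
  map_smul' _ _ := rfl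

theorem ofSym2_isSymm [Semiring R] (f : Sym2 k → R) : (ofSym2 f).IsSymm :=
  IsSymm.ext fun _ _ => congrArg f Sym2.eq_swap

theorem ofSym2_injective [Semiring R] :
    Function.Injective (ofSym2 : (Sym2 k → R) → Matrix k k R) := by
  intro f g h
  funext z
  induction z using Sym2.ind with
  | _ i j => exact congr_fun (congr_fun h i) j

theorem exists_isSymm_ne_zero_apply_eq_zero [Fintype k] [Field R] {V : Type*} [AddCommGroup V]
    [Module R V] [FiniteDimensional R V] (Φ : Matrix k k R →ₗ[R] V)
    (hdim : 2 * Module.finrank R V < Fintype.card k * (Fintype.card k + 1)) :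
    ∃ Δ : Matrix k k R, Δ.IsSymm ∧ Δ ≠ 0 ∧ Φ Δ = 0 := by
  have hcard : Module.finrank R V < Module.finrank R (Sym2 k → R) := by
    have := Nat.add_one_mul_choose_eq (Fintype.card k) 1
    rw [Module.finrank_fintype_fun_eq_card, Sym2.card]
    simp only [Nat.choose_one_right] at this
    linarith
  obtain ⟨f, hf, hf0⟩ := Submodule.exists_mem_ne_zero_of_ne_bot
    (LinearMap.ker_ne_bot_of_finrank_lt (f := Φ ∘ₗ ofSym2) hcard)
  exact ⟨ofSym2 f, ofSym2_isSymm f, fun h => hf0 (ofSym2_injective (h.trans (map_zero _).symm)),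
    hf⟩

end Sym2

section Spectral

variable {k : Type*} [Fintype k] [DecidableEq k] {Δ : Matrix k k ℝ}

theorem IsHermitian.one_add_smul_eq (hΔ : Δ.IsHermitian) (t : ℝ) :
    1 + t • Δ = conjStarAlgAut ℝ _ hΔ.eigenvectorUnitary
      (diagonal fun j => 1 + t * hΔ.eigenvalues j) := by
  have : diagonal (fun j => 1 + t * hΔ.eigenvalues j) = 1 + t • diagonal hΔ.eigenvalues := by
    rw [← diagonal_one, ← diagonal_smul, diagonal_add]
    rfl
  rw [this, map_add, map_one, map_smul]
  congr 2
  simpa using hΔ.spectral_theorem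

theorem IsHermitian.posSemidef_one_add_smul_iff (hΔ : Δ.IsHermitian) (t : ℝ) :
    (1 + t • Δ).PosSemidef ↔ ∀ j, 0 ≤ 1 + t * hΔ.eigenvalues j := by
  rw [hΔ.one_add_smul_eq]
  simp [isUnit_coe.posSemidef_star_right_conjugate_iff, posSemidef_diagonal_iff]

theorem IsHermitian.rank_one_add_smul (hΔ : Δ.IsHermitian) (t : ℝ) :
    (1 + t • Δ).rank = Fintype.card {j // 1 + t * hΔ.eigenvalues j ≠ 0} := by
  rw [← rank_diagonal, hΔ.one_add_smul_eq, conjStarAlgAut_apply, ← coe_star]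
  simp only [UnitaryGroup.det_isUnit, rank_mul_eq_left_of_isUnit_det,
    rank_mul_eq_right_of_isUnit_det]

/-- With `ρ` the largest `|μⱼ|` over the eigenvalues `μⱼ` of `Δ`, take `s = ρ⁻¹`: every
`1 + tμⱼ` with `|t| ≤ s` is nonnegative, and one of them vanishes at `t = ± s`. -/
theorem IsHermitian.exists_posSemidef_one_add_smul_rank_lt (hΔ : Δ.IsHermitian) (hΔ0 : Δ ≠ 0) :
    ∃ s : ℝ, 0 < s ∧ (∀ t, |t| ≤ s → (1 + t • Δ).PosSemidef) ∧
      ∃ t, |t| = s ∧ (1 + t • Δ).rank < Fintype.card k := by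
  set μ := hΔ.eigenvalues
  have hμ : μ ≠ 0 := mt hΔ.eigenvalues_eq_zero_iff.mp hΔ0
  obtain ⟨j, -⟩ := Function.ne_iff.mp hμ
  have : Nonempty k := ⟨j⟩
  obtain ⟨j₀, hj₀⟩ := Finite.exists_max fun j => |μ j|
  have hρ : 0 < |μ j₀| := by
    by_contra! h
    exact hμ (funext fun j => abs_nonpos_iff.mp ((hj₀ j).trans h))
  refine ⟨|μ j₀|⁻¹, inv_pos.mpr hρ, fun t ht => ?_, -(μ j₀)⁻¹, by rw [abs_neg, abs_inv], ?_⟩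
  · rw [hΔ.posSemidef_one_add_smul_iff]
    intro j
    have : |t * μ j| ≤ 1 := calc
      |t * μ j| = |t| * |μ j| := abs_mul t (μ j)
      _ ≤ |μ j₀|⁻¹ * |μ j₀| := mul_le_mul ht (hj₀ j) (abs_nonneg _) (by positivity)
      _ = 1 := inv_mul_cancel₀ hρ.ne'
    linarith [neg_abs_le (t * μ j)]
  · rw [hΔ.rank_one_add_smul]
    apply Fintype.card_subtype_lt (x := j₀)
    rw [neg_mul, inv_mul_cancel₀ (abs_pos.mp hρ)]
    simp

end Spectral

variable {n : Type*} [Fintype n] [DecidableEq n]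

/-- The columns of `B` are `√dₗ uₗ` for the eigenpairs `(dₗ, uₗ)` of `X` with `dₗ ≠ 0`. -/
theorem PosSemidef.exists_eq_mul_transpose {X : Matrix n n ℝ} (hX : X.PosSemidef) :
    ∃ B : Matrix n (Fin X.rank) ℝ, X = B * Bᵀ ∧ IsUnit (Bᵀ * B) := by
  set d := hX.1.eigenvalues
  set U : Matrix n n ℝ := (hX.1.eigenvectorUnitary : Matrix n n ℝ)
  set σ : Fin X.rank ≃ {l // d l ≠ 0} :=
    (Fintype.equivFinOfCardEq hX.1.rank_eq_card_non_zero_eigs.symm).symm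
  set e : Fin X.rank → n := fun k => σ k
  have he : Function.Injective e := Subtype.val_injective.comp σ.injective
  set D := diagonal fun l => √(d l)
  set V := U * D
  have hDD : D * D = diagonal d := by
    rw [diagonal_mul_diagonal]
    exact congrArg diagonal (funext fun l => Real.mul_self_sqrt (hX.eigenvalues_nonneg l))
  have hUU : Uᵀ * U = 1 := by
    simpa [star_eq_conjTranspose] using UnitaryGroup.star_mul_self hX.1.eigenvectorUnitary
  have hXV : X = V * Vᵀ := by
    have hspec : X = U * diagonal d * Uᵀ := by
      simpa [U, d, star_eq_conjTranspose] using hX.1.spectral_theorem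
    rw [hspec, ← hDD]
    simp only [V, D, transpose_mul, diagonal_transpose, Matrix.mul_assoc]
  have hVV : Vᵀ * V = diagonal d := by
    simp only [V, transpose_mul, D, diagonal_transpose, Matrix.mul_assoc, ← Matrix.mul_assoc Uᵀ,
      hUU, Matrix.one_mul, hDD]
  have hV0 : ∀ i l, d l = 0 → V i l = 0 := fun i l hl => by simp [V, D, hl]
  refine ⟨V.submatrix id e, ?_, ?_⟩
  · ext i j
    rw [congr_fun (congr_fun hXV i) j, mul_apply, mul_apply,
      ← Fintype.sum_subtype_add_sum_subtype (fun l => d l = 0),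
      Finset.sum_eq_zero fun l _ => by simp [hV0 i l l.prop], zero_add]
    exact (Equiv.sum_comp σ fun l => V i l * Vᵀ l j).symm
  · rw [transpose_submatrix, ← submatrix_mul _ _ _ _ _ Function.bijective_id, hVV,
      submatrix_diagonal _ _ he, isUnit_diagonal, Pi.isUnit_iff]
    exact fun k => (σ k).prop.isUnit

end Matrix

namespace SDP

variable {n ι : Type*} [Fintype n]

def IsFeasible (A : ι → Matrix n n ℝ) (b : ι → ℝ) (X : Matrix n n ℝ) : Prop :=
  X.PosSemidef ∧ ∀ i, (A i * X).trace = b i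

def IsOptimal (C : Matrix n n ℝ) (A : ι → Matrix n n ℝ) (b : ι → ℝ) (X : Matrix n n ℝ) :
    Prop :=
  IsFeasible A b X ∧ ∀ Y, IsFeasible A b Y → (C * X).trace ≤ (C * Y).trace

variable {C : Matrix n n ℝ} {A : ι → Matrix n n ℝ} {b : ι → ℝ} {X : Matrix n n ℝ}

theorem IsOptimal.trace_mul_eq_zero (hX : IsOptimal C A b X) {E : Matrix n n ℝ} {s : ℝ}
    (hs : 0 < s) (hadd : IsFeasible A b (X + s • E)) (hsub : IsFeasible A b (X - s • E)) :
    (C * E).trace = 0 := by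
  have h₁ := hX.2 _ hadd
  have h₂ := hX.2 _ hsub
  simp only [Matrix.mul_add, Matrix.mul_sub, trace_add, trace_sub, Matrix.mul_smul,
    trace_smul, smul_eq_mul] at h₁ h₂
  nlinarith

theorem IsOptimal.exists_rank_lt [DecidableEq n] [Fintype ι] (hX : IsOptimal C A b X)
    (hr : 2 * Fintype.card ι < X.rank * (X.rank + 1)) :
    ∃ Y, IsOptimal C A b Y ∧ Y.rank < X.rank := by
  obtain ⟨B, hXB, hB⟩ := hX.1.1.exists_eq_mul_transpose
  let Φ : Matrix (Fin X.rank) (Fin X.rank) ℝ →ₗ[ℝ] ι → ℝ :=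
    { toFun Δ i := (A i * (B * Δ * Bᵀ)).trace
      map_add' Δ Δ' := by ext; simp [Matrix.mul_add, Matrix.add_mul]
      map_smul' c Δ := by ext; simp }
  obtain ⟨Δ, hΔ, hΔ0, hΦ⟩ := exists_isSymm_ne_zero_apply_eq_zero Φ (by simpa using hr)
  obtain ⟨s, hs, hpsd, t, ht, hrank⟩ :=
    (isHermitian_iff_isSymm.mpr hΔ).exists_posSemidef_one_add_smul_rank_lt hΔ0
  have hY : ∀ τ : ℝ, B * (1 + τ • Δ) * Bᵀ = X + τ • (B * Δ * Bᵀ) := fun τ => by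
    rw [Matrix.mul_add, Matrix.add_mul, Matrix.mul_one, Matrix.mul_smul, Matrix.smul_mul, ← hXB]
  have hfeas : ∀ τ, |τ| ≤ s → IsFeasible A b (X + τ • (B * Δ * Bᵀ)) := fun τ hτ => by
    refine ⟨hY τ ▸ ?_, fun i => ?_⟩
    · simpa using (hpsd τ hτ).mul_mul_conjTranspose_same B
    · have hΦi : (A i * (B * Δ * Bᵀ)).trace = 0 := congr_fun hΦ i
      rw [Matrix.mul_add, trace_add, Matrix.mul_smul, trace_smul, hΦi, smul_zero, add_zero,
        hX.1.2 i]
  have hcost := hX.trace_mul_eq_zero hs (hfeas s (abs_of_pos hs).le)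
    (by simpa [sub_eq_add_neg] using hfeas (-s) (by simp [abs_of_pos hs]))
  refine ⟨X + t • (B * Δ * Bᵀ), ⟨hfeas t ht.le, fun Z hZ => ?_⟩, ?_⟩
  · rw [Matrix.mul_add, trace_add, Matrix.mul_smul, trace_smul, hcost, smul_zero, add_zero]
    exact hX.2 Z hZ
  · rw [← hY, rank_mul_mul_transpose_of_isUnit hB]
    simpa using hrank

theorem IsOptimal.exists_rank_mul_le [DecidableEq n] [Fintype ι] (hX : IsOptimal C A b X) :
    ∃ Y, IsOptimal C A b Y ∧ Y.rank * (Y.rank + 1) ≤ 2 * Fintype.card ι := by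
  induction hr : X.rank using Nat.strong_induction_on generalizing X with
  | _ r ih =>
    by_cases hsmall : r * (r + 1) ≤ 2 * Fintype.card ι
    · exact ⟨X, hX, hr ▸ hsmall⟩
    · obtain ⟨Y, hY, hYr⟩ := hX.exists_rank_lt (by rw [hr]; omega)
      exact ih _ (hr ▸ hYr) hY rfl

end SDP

theorem sdp_exists_low_rank_optimal_solution_general
    (n m : ℕ) (C : Matrix (Fin n) (Fin n) ℝ)
    (A : Fin m → Matrix (Fin n) (Fin n) ℝ)
    (b : Fin m → ℝ)
    (hattained : ∃ X : Matrix (Fin n) (Fin n) ℝ,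
      (X.PosSemidef ∧ ∀ i, (A i * X).trace = b i) ∧
      ∀ Y : Matrix (Fin n) (Fin n) ℝ, Y.PosSemidef → (∀ i, (A i * Y).trace = b i) →
        (C * X).trace ≤ (C * Y).trace) :
    ∃ X : Matrix (Fin n) (Fin n) ℝ,
      (X.PosSemidef ∧ ∀ i, (A i * X).trace = b i) ∧
      (∀ Y : Matrix (Fin n) (Fin n) ℝ, Y.PosSemidef → (∀ i, (A i * Y).trace = b i) →
        (C * X).trace ≤ (C * Y).trace) ∧
      X.rank * (X.rank + 1) ≤ 2 * m := by
  obtain ⟨X, hX, hXmin⟩ := hattained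
  have hXopt : SDP.IsOptimal C A b X := ⟨hX, fun Y hY => hXmin Y hY.1 hY.2⟩
  obtain ⟨Y, ⟨hY, hYmin⟩, hYrank⟩ := hXopt.exists_rank_mul_le
  exact ⟨Y, hY, fun Z hZ hZb => hYmin Z ⟨hZ, hZb⟩, by simpa using hYrank⟩

/-- If the standard-form SDP (minimize `Tr(CX)` over real symmetric `n × n` matrices `X`
subject to `Tr(Aᵢ X) = bᵢ` for `i = 1,…,m` and `X ⪰ 0`) is feasible and attains its optimal
value, then there exists an optimal solution `X` whose rank `r` satisfies `r(r+1)/2 ≤ m`. -/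
theorem sdp_exists_low_rank_optimal_solution
    (n m : ℕ) (C : Matrix (Fin n) (Fin n) ℝ) (hC : C.IsSymm)
    (A : Fin m → Matrix (Fin n) (Fin n) ℝ) (hA : ∀ i, (A i).IsSymm)
    (b : Fin m → ℝ)
    (hattained : ∃ X : Matrix (Fin n) (Fin n) ℝ,
      (X.PosSemidef ∧ ∀ i, (A i * X).trace = b i) ∧
      ∀ Y : Matrix (Fin n) (Fin n) ℝ, Y.PosSemidef → (∀ i, (A i * Y).trace = b i) →
        (C * X).trace ≤ (C * Y).trace) :
    ∃ X : Matrix (Fin n) (Fin n) ℝ,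
      (X.PosSemidef ∧ ∀ i, (A i * X).trace = b i) ∧
      (∀ Y : Matrix (Fin n) (Fin n) ℝ, Y.PosSemidef → (∀ i, (A i * Y).trace = b i) →
        (C * X).trace ≤ (C * Y).trace) ∧
      X.rank * (X.rank + 1) ≤ 2 * m :=
  sdp_exists_low_rank_optimal_solution_general n m C A b hattained
end

section
/- Let A_1,…,A_m be real symmetric n×n matrices, b ∈ ℝ^m, M > 0, and define f(X) = (1/M) log(Σ_{i=1}^m exp(M(Tr(A_iX) − b_i))) on the spectrahedron Δ = {X ∈ S^n : X positive semidefinite, Tr(X) = 1}. Suppose there exists X̂ ∈ Δ with Tr(A_iX̂) ≤ b_i for all i. Then for every ε ≥ 0, any X ∈ Δ with f(X) ≤ inf_{Y ∈ Δ} f(Y) + ε satisfies Tr(A_iX) ≤ b_i + ε + (log m)/M for all i = 1,…,m. -/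
/-!
Hazan's penalty is a smoothed maximum of the constraint violations `Tr(Aᵢ X) - bᵢ`: it dominates
each of them, and it exceeds their maximum by at most `(log m)/M`. At the feasible point `X̂` all
violations are `≤ 0`, so the infimum of the penalty is at most `(log m)/M`; a point within `ε` of
the infimum therefore has every violation below `ε + (log m)/M`.
-/

open Matrix

/-- Hazan's log-sum-exp feasibility penalty
`f(X) = (1/M) log (∑ i, exp (M (Tr(Aᵢ X) - bᵢ)))`. -/
noncomputable def hazanPenalty (n m : ℕ) (A : Fin m → Matrix (Fin n) (Fin n) ℝ)
    (b : Fin m → ℝ) (M : ℝ) (X : Matrix (Fin n) (Fin n) ℝ) : ℝ :=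
  (1 / M) * Real.log (∑ i, Real.exp (M * ((A i * X).trace - b i)))

namespace Real

/-- A real `sInf` of a set that is not bounded below is `0`, which is why `max a 0` appears. -/
lemma sInf_le_max_zero {s : Set ℝ} {a : ℝ} (ha : a ∈ s) : sInf s ≤ max a 0 := by
  by_cases hs : BddBelow s
  · exact (csInf_le hs ha).trans (le_max_left a 0)
  · rw [sInf_of_not_bddBelow hs]
    exact le_max_right a 0

section LogSumExp

variable {ι : Type*} [Fintype ι] {M : ℝ} (x : ι → ℝ)

lemma le_one_div_mul_log_sum_exp_mul (hM : 0 < M) (i : ι) :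
    x i ≤ 1 / M * log (∑ j, exp (M * x j)) := by
  have hterm : exp (M * x i) ≤ ∑ j, exp (M * x j) :=
    Finset.single_le_sum (fun j _ => (exp_pos (M * x j)).le) (Finset.mem_univ i)
  have hlog : M * x i ≤ log (∑ j, exp (M * x j)) :=
    (le_log_iff_exp_le ((exp_pos _).trans_le hterm)).mpr hterm
  rw [one_div_mul_eq_div, le_div_iff₀ hM, mul_comm]
  exact hlog

lemma one_div_mul_log_sum_exp_mul_le [Nonempty ι] (hM : 0 ≤ M) (hx : ∀ j, x j ≤ 0) :
    1 / M * log (∑ j, exp (M * x j)) ≤ log (Fintype.card ι) / M := by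
  have hsum : ∑ j, exp (M * x j) ≤ Fintype.card ι :=
    calc ∑ j, exp (M * x j) ≤ ∑ _j : ι, (1 : ℝ) :=
          Finset.sum_le_sum fun j _ => exp_le_one_iff.mpr (mul_nonpos_of_nonneg_of_nonpos hM (hx j))
      _ = Fintype.card ι := by simp
  have hpos : 0 < ∑ j, exp (M * x j) := Finset.sum_pos (fun j _ => exp_pos _) Finset.univ_nonempty
  rw [one_div_mul_eq_div]
  exact div_le_div_of_nonneg_right (log_le_log hpos hsum) hM

end LogSumExp

end Real

theorem hazan_penalty_near_minimizer_near_feasible_general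
    (n m : ℕ) (A : Fin m → Matrix (Fin n) (Fin n) ℝ)
    (b : Fin m → ℝ) (M : ℝ) (hM : 0 < M)
    (Xhat : Matrix (Fin n) (Fin n) ℝ) (hXhatPSD : Xhat.PosSemidef) (hXhatTr : Xhat.trace = 1)
    (hXhatFeas : ∀ i, (A i * Xhat).trace ≤ b i)
    (ε : ℝ)
    (X : Matrix (Fin n) (Fin n) ℝ)
    (hXnearopt : hazanPenalty n m A b M X ≤
      sInf {t : ℝ | ∃ Y : Matrix (Fin n) (Fin n) ℝ,
        Y.PosSemidef ∧ Y.trace = 1 ∧ t = hazanPenalty n m A b M Y} + ε) :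
    ∀ i, (A i * X).trace ≤ b i + ε + Real.log m / M := by
  intro i
  have : Nonempty (Fin m) := ⟨i⟩
  have hXhat : hazanPenalty n m A b M Xhat ≤ Real.log m / M := by
    have := Real.one_div_mul_log_sum_exp_mul_le (fun j => (A j * Xhat).trace - b j) hM.le
      fun j => sub_nonpos.mpr (hXhatFeas j)
    rwa [Fintype.card_fin] at this
  have hinf : sInf {t : ℝ | ∃ Y : Matrix (Fin n) (Fin n) ℝ,
      Y.PosSemidef ∧ Y.trace = 1 ∧ t = hazanPenalty n m A b M Y} ≤ Real.log m / M :=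
    le_trans (Real.sInf_le_max_zero ⟨Xhat, hXhatPSD, hXhatTr, rfl⟩)
      (max_le hXhat (div_nonneg (Real.log_natCast_nonneg m) hM.le))
  have hX : (A i * X).trace - b i ≤ hazanPenalty n m A b M X :=
    Real.le_one_div_mul_log_sum_exp_mul (fun j => (A j * X).trace - b j) hM i
  linarith

/-- If some `X̂` in the spectrahedron satisfies `Tr(Aᵢ X̂) ≤ bᵢ` for all `i`, then any `X` in the
spectrahedron whose penalty value is within `ε` of the infimum of the penalty over the
spectrahedron satisfies `Tr(Aᵢ X) ≤ bᵢ + ε + (log m)/M` for all `i`. -/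
theorem hazan_penalty_near_minimizer_near_feasible
    (n m : ℕ) (A : Fin m → Matrix (Fin n) (Fin n) ℝ) (hA : ∀ i, (A i).IsSymm)
    (b : Fin m → ℝ) (M : ℝ) (hM : 0 < M)
    (Xhat : Matrix (Fin n) (Fin n) ℝ) (hXhatPSD : Xhat.PosSemidef) (hXhatTr : Xhat.trace = 1)
    (hXhatFeas : ∀ i, (A i * Xhat).trace ≤ b i)
    (ε : ℝ) (hε : 0 ≤ ε)
    (X : Matrix (Fin n) (Fin n) ℝ) (hXPSD : X.PosSemidef) (hXTr : X.trace = 1)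
    (hXnearopt : hazanPenalty n m A b M X ≤
      sInf {t : ℝ | ∃ Y : Matrix (Fin n) (Fin n) ℝ,
        Y.PosSemidef ∧ Y.trace = 1 ∧ t = hazanPenalty n m A b M Y} + ε) :
    ∀ i, (A i * X).trace ≤ b i + ε + Real.log m / M :=
  hazan_penalty_near_minimizer_near_feasible_general n m A b M hM Xhat hXhatPSD hXhatTr hXhatFeas ε
    X hXnearopt
end
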